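/- arXiv:1710.06532 — 2 statements merged into one kernel-verified Lean document; each statement's English description precedes it below -/
import Mathlib

section
/- Let μ be a finite positive Borel measure on 𝕋 whose support contains at least N+1 distinct points, and let Φ_N be the monic orthogonal polynomial of degree N for μ. Let M_z be the multiplication-by-z operator on L²(μ) and π_N the orthogonal projection onto span{1, z, …, z^{N-1}}. Then Φ_N is the characteristic polynomial of the finite truncation π_N M_z π_N restricted to span{1, z, …, z^{N-1}}. -/
/-!
The residual `z^(l+1) - ∑ⱼ A j l • z^j` of the `l`-th column of `A` is a polynomial of degree at
most `N` orthogonal to `1, z, …, z^(N-1)`. Since the support of `μ` has at least `N` points,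
`‖p‖²_{L²(μ)} = 0` forces a polynomial `p` of degree `< N` to vanish, so orthogonal polynomials of
degree `≤ N` are multiples of `Φ`. Hence `Φ` divides every residual, i.e. `A` is the matrix of
multiplication by `X` on `ℂ[X]/(Φ)` in the basis `1, X, …, X^(N-1)`, whose characteristic
polynomial is the minimal polynomial `Φ` of `X`.
-/

open MeasureTheory Complex

noncomputable instance : MeasurableSpace Circle := borel Circle
instance : BorelSpace Circle := ⟨rfl⟩

open Polynomial ComplexConjugate

theorem Continuous.eqOn_measureSupport_of_ae_eq {X Y : Type*} [TopologicalSpace X]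
    [MeasurableSpace X] [TopologicalSpace Y] [T2Space Y] {μ : Measure X} {f g : X → Y}
    (hf : Continuous f) (hg : Continuous g) (h : f =ᵐ[μ] g) : Set.EqOn f g μ.support := by
  intro x hx
  by_contra hne
  have hU : {y | f y ≠ g y} ∈ nhds x := (isClosed_eq hf hg).isOpen_compl.mem_nhds hne
  exact ((Measure.mem_support_iff_forall x).mp hx _ hU).ne' (ae_iff.mp h)

theorem Continuous.eq_zero_on_measureSupport_of_integral_mul_conj_eq_zero {X 𝕜 : Type*}
    [TopologicalSpace X] [CompactSpace X] [MeasurableSpace X] [OpensMeasurableSpace X]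
    [RCLike 𝕜] {μ : Measure X} [IsFiniteMeasure μ] {f : X → 𝕜} (hf : Continuous f)
    (h : ∫ x, f x * conj (f x) ∂μ = 0) : Set.EqOn f 0 μ.support := by
  have hsq : ∫ x, ‖f x‖ ^ 2 ∂μ = 0 := by
    simpa only [RCLike.mul_conj, ← RCLike.ofReal_pow, integral_ofReal,
      RCLike.ofReal_eq_zero] using h
  have hint : Integrable (fun x => ‖f x‖ ^ 2) μ :=
    (hf.norm.pow 2).integrable_of_hasCompactSupport (.of_compactSpace _)
  have hae : f =ᵐ[μ] 0 := by
    filter_upwards [(integral_eq_zero_iff_of_nonneg (fun x => by positivity) hint).mp hsq]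
      with x hx
    simpa using hx
  exact hf.eqOn_measureSupport_of_ae_eq continuous_const hae

theorem Matrix.charpoly_eq_of_dvd_X_pow_succ_sub_sum {K : Type*} [Field K] {N : ℕ} {Φ : K[X]}
    (hmonic : Φ.Monic) (hdeg : Φ.natDegree = N) (A : Matrix (Fin N) (Fin N) K)
    (hA : ∀ l : Fin N, Φ ∣ X ^ ((l : ℕ) + 1) - ∑ j, C (A j l) * X ^ (j : ℕ)) :
    A.charpoly = Φ := by
  set pb := AdjoinRoot.powerBasis hmonic.ne_zero
  let b : Module.Basis (Fin N) K (AdjoinRoot Φ) :=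
    pb.basis.reindex (finCongr (by rw [AdjoinRoot.powerBasis_dim, hdeg]))
  have hb : ∀ j : Fin N, b j = AdjoinRoot.root Φ ^ (j : ℕ) := by simp [b, pb]
  have hlmul : Matrix.toLin b b A = Algebra.lmul K _ (AdjoinRoot.root Φ) := by
    refine b.ext fun l => ?_
    have hroot := AdjoinRoot.mk_eq_zero.mpr (hA l)
    simp only [map_sub, map_sum, map_mul, map_pow, AdjoinRoot.mk_X, AdjoinRoot.mk_C,
      sub_eq_zero, ← AdjoinRoot.algebraMap_eq, ← Algebra.smul_def] at hroot
    rw [Matrix.toLin_self, Algebra.coe_lmul_eq_mul, LinearMap.mul_apply', hb, ← pow_succ', hroot]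
    simp only [hb]
  have : Module.Finite K (AdjoinRoot Φ) := pb.finite
  calc A.charpoly = (LinearMap.toMatrix b b (Algebra.lmul K _ (AdjoinRoot.root Φ))).charpoly := by
        rw [← hlmul, LinearMap.toMatrix_toLin]
    _ = (Algebra.leftMulMatrix pb.basis pb.gen).charpoly := by
        rw [LinearMap.charpoly_toMatrix, Algebra.leftMulMatrix_apply, LinearMap.charpoly_toMatrix,
          AdjoinRoot.powerBasis_gen]
    _ = Φ := by rw [charpoly_leftMulMatrix, AdjoinRoot.minpoly_powerBasis_gen_of_monic hmonic]

section Circle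

variable {μ : Measure Circle} [IsFiniteMeasure μ] {N : ℕ}

theorem Polynomial.eq_zero_of_integral_mul_conj_pow_eq_zero {S : Finset Circle}
    (hS : ∀ z ∈ S, z ∈ μ.support) (hN : N ≤ S.card) {p : ℂ[X]} (hp : p.degree < N)
    (horth : ∀ m < N, ∫ z : Circle, p.eval (z : ℂ) * conj ((z : ℂ) ^ m) ∂μ = 0) : p = 0 := by
  by_contra hp0
  have hpN : p.natDegree < N := (natDegree_lt_iff_degree_lt hp0).mpr hp
  have hconj : ∀ z : ℂ, conj (p.eval z) = ∑ m ∈ Finset.range N, conj (p.coeff m) * conj (z ^ m) :=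
    fun z => by simp only [eval_eq_sum_range' hpN, map_sum, map_mul]
  have hnorm : ∫ z : Circle, p.eval (z : ℂ) * conj (p.eval (z : ℂ)) ∂μ = 0 := by
    simp_rw [hconj, Finset.mul_sum, mul_left_comm (p.eval _)]
    rw [integral_finsetSum _ fun m _ =>
      (by fun_prop : Continuous _).integrable_of_hasCompactSupport (.of_compactSpace _)]
    exact Finset.sum_eq_zero fun m hm => by
      rw [integral_const_mul, horth m (Finset.mem_range.mp hm), mul_zero]
  have hvanish : Set.EqOn (fun z : Circle => p.eval (z : ℂ)) 0 μ.support :=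
    (by fun_prop : Continuous fun z : Circle => p.eval (z : ℂ))
      |>.eq_zero_on_measureSupport_of_integral_mul_conj_eq_zero hnorm
  refine hp0 (eq_zero_of_natDegree_lt_card_of_eval_eq_zero' p (S.image fun z : Circle => (z : ℂ))
    (Finset.forall_mem_image.mpr fun z hz => hvanish (hS z hz)) ?_)
  rw [Finset.card_image_of_injective S Circle.coe_injective]
  omega

theorem Polynomial.eq_C_coeff_mul_of_integral_mul_conj_pow_eq_zero {S : Finset Circle}
    (hS : ∀ z ∈ S, z ∈ μ.support) (hN : N ≤ S.card) {Φ : ℂ[X]} (hmonic : Φ.Monic)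
    (hdeg : Φ.natDegree = N)
    (hΦ : ∀ m < N, ∫ z : Circle, Φ.eval (z : ℂ) * conj ((z : ℂ) ^ m) ∂μ = 0)
    {R : ℂ[X]} (hR : R.degree ≤ N)
    (hRorth : ∀ m < N, ∫ z : Circle, R.eval (z : ℂ) * conj ((z : ℂ) ^ m) ∂μ = 0) :
    R = C (R.coeff N) * Φ := by
  rw [← sub_eq_zero]
  refine eq_zero_of_integral_mul_conj_pow_eq_zero hS hN ?_ fun m hm => ?_
  · refine (degree_lt_iff_coeff_zero _ _).mpr fun k hk => ?_
    rcases hk.eq_or_lt with rfl | hk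
    · simp [← hdeg, hmonic.coeff_natDegree]
    · simp [(degree_le_iff_coeff_zero R N).mp hR k (by exact_mod_cast hk),
        coeff_eq_zero_of_natDegree_lt (hdeg ▸ hk)]
  · have hint : ∀ p : ℂ[X], Integrable (fun z : Circle => p.eval (z : ℂ) * conj ((z : ℂ) ^ m)) μ :=
      fun p => (by fun_prop : Continuous _).integrable_of_hasCompactSupport (.of_compactSpace _)
    simp only [eval_sub, eval_mul, eval_C, sub_mul, mul_assoc]
    rw [integral_sub (hint R) ((hint Φ).const_mul _), integral_const_mul, hRorth m hm, hΦ m hm,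
      mul_zero, sub_zero]

end Circle

/-- `A` is the matrix of `π_N M_z π_N` in the basis `1, z, …, z^(N-1)`: its `l`-th column is
characterized by `z · z^l - ∑ⱼ A j l • z^j ⟂ z^m` in `L²(μ)` for all `m < N`. -/
theorem monic_orthogonal_poly_eq_charpoly_truncation
    (μ : Measure Circle) [IsFiniteMeasure μ] (N : ℕ)
    (hsupp : ∃ S : Finset Circle, N + 1 ≤ S.card ∧
      ∀ z ∈ S, ∀ ε : ℝ, 0 < ε → 0 < μ (Metric.ball z ε))
    (Φ : Polynomial ℂ) (hmonic : Φ.Monic) (hdeg : Φ.natDegree = N)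
    (horth : ∀ Q : Polynomial ℂ, Q.degree < (N : ℕ) →
      ∫ z : Circle, Φ.eval (z : ℂ) * (starRingEnd ℂ) (Q.eval (z : ℂ)) ∂μ = 0)
    (A : Matrix (Fin N) (Fin N) ℂ)
    (hA : ∀ l m : Fin N,
      ∫ z : Circle, ((z : ℂ) ^ ((l : ℕ) + 1) - ∑ j : Fin N, A j l * (z : ℂ) ^ (j : ℕ)) *
        (starRingEnd ℂ) ((z : ℂ) ^ (m : ℕ)) ∂μ = 0) :
    A.charpoly = Φ := by
  obtain ⟨S, hcard, hS⟩ := hsupp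
  have hS_support : ∀ z ∈ S, z ∈ μ.support := fun z hz =>
    Metric.nhds_basis_ball.mem_measureSupport.mpr (hS z hz)
  have hΦ : ∀ m < N, ∫ z : Circle, Φ.eval (z : ℂ) * conj ((z : ℂ) ^ m) ∂μ = 0 := fun m hm => by
    simpa using horth (X ^ m) (by rw [degree_X_pow]; exact_mod_cast hm)
  refine Matrix.charpoly_eq_of_dvd_X_pow_succ_sub_sum hmonic hdeg A fun l => ?_
  set R : ℂ[X] := X ^ ((l : ℕ) + 1) - ∑ j, C (A j l) * X ^ (j : ℕ)
  have hR : R.degree ≤ N := (degree_sub_le _ _).trans <| max_le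
    (by rw [degree_X_pow]; exact_mod_cast l.isLt) (degree_sum_fin_lt _).le
  have hRorth : ∀ m < N, ∫ z : Circle, R.eval (z : ℂ) * conj ((z : ℂ) ^ m) ∂μ = 0 :=
    fun m hm => by simpa [R, eval_finsetSum] using hA l ⟨m, hm⟩
  rw [eq_C_coeff_mul_of_integral_mul_conj_pow_eq_zero hS_support (by omega) hmonic hdeg hΦ hR
    hRorth]
  exact dvd_mul_left _ _
end

section
/- Let μ be a finite positive Borel measure on the unit circle 𝕋 whose support is infinite. Then all zeros of every monic orthogonal polynomial Φ_N for μ lie strictly inside the open unit disc {z ∈ ℂ : |z| < 1}. -/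
/-!
Let `z₀` be a zero of `Φ` and write `Φ = (X - z₀) Q` with `deg Q < N`. On the circle
`|z Q(z)| = |Q(z)|` and `z Q = Φ + z₀ Q`; since `Φ ⊥ Q`, integrating `|Φ + z₀ Q|²` gives
`‖Q‖² = ‖Φ‖² + |z₀|² ‖Q‖²`. Finally `‖Φ‖² > 0`, because `Φ` has finitely many zeros while every
neighbourhood of each of the infinitely many support points has positive measure.
-/

open MeasureTheory Complex

open Polynomial ComplexConjugate

section

variable {X : Type*} [PseudoMetricSpace X] [MeasurableSpace X] {μ : Measure X}

theorem measure_pos_of_isOpen_of_forall_ball_pos {U : Set X} (hU : IsOpen U) {x : X}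
    (hx : x ∈ U) (hμx : ∀ ε : ℝ, 0 < ε → 0 < μ (Metric.ball x ε)) : 0 < μ U := by
  obtain ⟨ε, hε, hball⟩ := Metric.isOpen_iff.mp hU x hx
  exact (hμx ε hε).trans_le (measure_mono hball)

variable [CompactSpace X] [OpensMeasurableSpace X] [IsFiniteMeasure μ]

theorem Continuous.integrable_of_compactSpace {E : Type*} [NormedAddCommGroup E] {f : X → E}
    (hf : Continuous f) : Integrable f μ :=
  hf.integrable_of_hasCompactSupport (HasCompactSupport.of_compactSpace f)

theorem integral_normSq_pos_of_finite_zeros {f : X → ℂ} (hf : Continuous f)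
    (hzeros : {x | f x = 0}.Finite)
    (hsupp : {x : X | ∀ ε : ℝ, 0 < ε → 0 < μ (Metric.ball x ε)}.Infinite) :
    0 < ∫ x, normSq (f x) ∂μ := by
  have hcont : Continuous fun x => normSq (f x) := continuous_normSq.comp hf
  rw [integral_pos_iff_support_of_nonneg (fun x => normSq_nonneg (f x))
    hcont.integrable_of_compactSpace]
  obtain ⟨x, hμx, hfx⟩ := (hsupp.sdiff hzeros).nonempty
  refine measure_pos_of_isOpen_of_forall_ball_pos hcont.isOpen_support ?_ hμx
  simpa [Function.mem_support, normSq_eq_zero] using hfx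

theorem integral_normSq_eq_of_mul_eq_add_mul {g φ q : X → ℂ} {c : ℂ}
    (hφ : Continuous φ) (hq : Continuous q) (hg : ∀ x, normSq (g x) = 1)
    (hmul : ∀ x, g x * q x = φ x + c * q x) (horth : ∫ x, φ x * conj (q x) ∂μ = 0) :
    ∫ x, normSq (q x) ∂μ = ∫ x, normSq (φ x) ∂μ + normSq c * ∫ x, normSq (q x) ∂μ := by
  have hpt : ∀ x, normSq (q x) =
      normSq (φ x) + normSq c * normSq (q x) + 2 * (conj c * (φ x * conj (q x))).re := by
    intro x
    have := congrArg normSq (hmul x)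
    rwa [normSq_mul, hg, one_mul, normSq_add, normSq_mul, map_mul, mul_left_comm] at this
  have hcross : ∫ x, (conj c * (φ x * conj (q x))).re ∂μ = 0 := by
    have hint : Integrable (fun x => conj c * (φ x * conj (q x))) μ :=
      Continuous.integrable_of_compactSpace (by fun_prop)
    have := integral_re hint
    simp only [RCLike.re_to_complex] at this
    rw [this, integral_const_mul, horth, mul_zero, zero_re]
  have hnormSq : ∀ f : X → ℂ, Continuous f → Integrable (fun x => normSq (f x)) μ :=
    fun f hf => (continuous_normSq.comp hf).integrable_of_compactSpace
  calc ∫ x, normSq (q x) ∂μ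
      = ∫ x, (normSq (φ x) + normSq c * normSq (q x)
          + 2 * (conj c * (φ x * conj (q x))).re) ∂μ := integral_congr_ae (.of_forall hpt)
    _ = ∫ x, normSq (φ x) ∂μ + normSq c * ∫ x, normSq (q x) ∂μ
          + 2 * ∫ x, (conj c * (φ x * conj (q x))).re ∂μ := by
      rw [integral_add, integral_add, integral_const_mul, integral_const_mul]
      · exact hnormSq φ hφ
      · exact (hnormSq q hq).const_mul _
      · exact (hnormSq φ hφ).add ((hnormSq q hq).const_mul _)
      · exact (Continuous.integrable_of_compactSpace (by fun_prop)).const_mul _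
    _ = _ := by rw [hcross, mul_zero, add_zero]

end

/-- For a finite positive measure `μ` on the unit circle with infinite
support, every zero of every monic orthogonal polynomial `Φ_N` for `μ` lies strictly inside
the open unit disc. -/
theorem opuc_zeros_in_open_disc
    (μ : Measure Circle) [IsFiniteMeasure μ]
    (hsupp : {z : Circle | ∀ ε : ℝ, 0 < ε → 0 < μ (Metric.ball z ε)}.Infinite)
    (N : ℕ) (Φ : Polynomial ℂ) (hmonic : Φ.Monic) (hdeg : Φ.natDegree = N)
    (horth : ∀ Q : Polynomial ℂ, Q.degree < (N : ℕ) →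
      ∫ z : Circle, Φ.eval (z : ℂ) * (starRingEnd ℂ) (Q.eval (z : ℂ)) ∂μ = 0) :
    ∀ z : ℂ, Φ.IsRoot z → ‖z‖ < 1 := by
  intro z₀ hroot
  set Q := Φ /ₘ (X - C z₀)
  have hfac : (X - C z₀) * Q = Φ := mul_divByMonic_eq_iff_isRoot.mpr hroot
  have hQdeg : Q.degree < N := by
    rw [← hdeg, ← degree_eq_natDegree hmonic.ne_zero]
    exact degree_divByMonic_lt _ _ hmonic.ne_zero (by rw [degree_X_sub_C]; exact one_pos)
  have heval : ∀ p : ℂ[X], Continuous fun w : Circle => p.eval (w : ℂ) :=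
    fun p => p.continuous.comp continuous_subtype_val
  have hroots : {w : Circle | Φ.eval (w : ℂ) = 0}.Finite :=
    (finite_setOfPred_isRoot hmonic.ne_zero).preimage Subtype.val_injective.injOn
  have hnormSq := integral_normSq_eq_of_mul_eq_add_mul (g := fun w : Circle => (w : ℂ))
    (heval Φ) (heval Q) (fun w => by rw [normSq_eq_norm_sq, Circle.norm_coe, one_pow])
    (fun w => by rw [← hfac, eval_mul, eval_sub, eval_X, eval_C]; ring) (horth Q hQdeg)
  have hΦpos := integral_normSq_pos_of_finite_zeros (heval Φ) hroots hsupp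
  have hQnonneg : 0 ≤ ∫ w : Circle, normSq (Q.eval (w : ℂ)) ∂μ :=
    integral_nonneg fun _ => normSq_nonneg _
  have hz₀ : ‖z₀‖ ^ 2 < 1 := by rw [← normSq_eq_norm_sq]; nlinarith
  exact (sq_lt_one_iff₀ (norm_nonneg z₀)).mp hz₀
end
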